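/- Let a < 0, K > 0, C₁ ∈ ℝ, C₂ ≠ 0. Define V(t) = C₁ + ((8aC₁² + K²)/(32aC₂))·e^{2√(−2a)t} + C₂·e^{−2√(−2a)t}. Then wherever V(t) ≠ 0, V satisfies V'' + 4aV − ((V')² − K²)/(2V) = 0. -/

import Mathlib

/-- For `a < 0`, `K > 0`, `C₁ ∈ ℝ`, `C₂ ≠ 0`, the function
`V(t) = C₁ + ((8aC₁² + K²)/(32aC₂))e^{2√(−2a)t} + C₂e^{−2√(−2a)t}`
satisfies `V'' + 4aV − ((V')² − K²)/(2V) = 0` wherever `V(t) ≠ 0`. -/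
theorem hyperbolic_variance_solution
    (a K C₁ C₂ : ℝ) (ha : a < 0) (hK : 0 < K) (hC₂ : C₂ ≠ 0)
    (V : ℝ → ℝ)
    (hV : ∀ t, V t = C₁
      + ((8 * a * C₁ ^ 2 + K ^ 2) / (32 * a * C₂)) * Real.exp (2 * Real.sqrt (-2 * a) * t)
      + C₂ * Real.exp (-2 * Real.sqrt (-2 * a) * t)) :
    ∀ t, V t ≠ 0 →
      deriv (deriv V) t + 4 * a * V t - ((deriv V t) ^ 2 - K ^ 2) / (2 * V t) = 0 := by
  have ha2 : (0:ℝ) < -2 * a := by linarith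
  set s := Real.sqrt (-2 * a) with hs
  have hs2 : s ^ 2 = -2 * a := Real.sq_sqrt (le_of_lt ha2)
  set B := (8 * a * C₁ ^ 2 + K ^ 2) / (32 * a * C₂) with hB
  have hne : 32 * a * C₂ ≠ 0 := by
    refine mul_ne_zero (mul_ne_zero (by norm_num) (ne_of_lt ha)) hC₂
  have hBe : B * (32 * a * C₂) = 8 * a * C₁ ^ 2 + K ^ 2 := by
    rw [hB]; field_simp
    exact mul_div_cancel_left₀ _ (ne_of_lt ha)
  have hVe : V = fun x => C₁ + B * Real.exp (2 * s * x) + C₂ * Real.exp (-2 * s * x) :=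
    funext hV
  have hlin : ∀ (c : ℝ) (x : ℝ), HasDerivAt (fun y : ℝ => Real.exp (c * y))
      (c * Real.exp (c * x)) x := by
    intro c x
    have h : HasDerivAt (fun y : ℝ => c * y) c x := by
      simpa using (hasDerivAt_id x).const_mul c
    simpa [mul_comm] using h.exp
  have hVd : ∀ x, HasDerivAt V
      (2 * s * B * Real.exp (2 * s * x) + (-2 * s) * C₂ * Real.exp (-2 * s * x)) x := by
    intro x
    rw [hVe]
    have h1 := ((hlin (2 * s) x).const_mul B)
    have h2 := ((hlin (-2 * s) x).const_mul C₂)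
    have := ((hasDerivAt_const x C₁).add h1).add h2
    convert this using 1
    · rfl
    · rfl
    · rfl
    · ring
  have hD1 : deriv V = fun x =>
      2 * s * B * Real.exp (2 * s * x) + (-2 * s) * C₂ * Real.exp (-2 * s * x) :=
    funext fun x => (hVd x).deriv
  have hVdd : ∀ x, HasDerivAt (deriv V)
      (4 * s ^ 2 * B * Real.exp (2 * s * x) + 4 * s ^ 2 * C₂ * Real.exp (-2 * s * x)) x := by
    intro x
    rw [hD1]
    have h1 := ((hlin (2 * s) x).const_mul (2 * s * B))
    have h2 := ((hlin (-2 * s) x).const_mul ((-2 * s) * C₂))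
    have := h1.add h2
    convert this using 1
    · rfl
    · rfl
    · rfl
    · ring
  intro t hVt
  have hD1t : deriv V t = 2 * s * B * Real.exp (2 * s * t) + (-2 * s) * C₂ * Real.exp (-2 * s * t) := by
    rw [hD1]
  have hD2t : deriv (deriv V) t
      = 4 * s ^ 2 * B * Real.exp (2 * s * t) + 4 * s ^ 2 * C₂ * Real.exp (-2 * s * t) :=
    (hVdd t).deriv
  have hVtval : V t = C₁ + B * Real.exp (2 * s * t) + C₂ * Real.exp (-2 * s * t) := hV t
  set E := Real.exp (2 * s * t) with hE
  set F := Real.exp (-2 * s * t) with hF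
  have hEF : E * F = 1 := by
    rw [hE, hF, ← Real.exp_add]
    norm_num
  have h2V : (2 : ℝ) * (C₁ + B * E + C₂ * F) ≠ 0 := by
    rw [hVtval] at hVt
    exact mul_ne_zero two_ne_zero hVt
  rw [hD2t, hD1t, hVtval, sub_eq_zero, eq_div_iff h2V]
  linear_combination (8 * (B * E + C₂ * F) * (C₁ + B * E + C₂ * F)
      - 4 * (B * E - C₂ * F) ^ 2) * hs2 + (-1 : ℝ) * hBe + (-(32 : ℝ) * a * B * C₂) * hEF
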